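/- There exists a constant c_2 > 0, depending only on d, such that for all x, z ∈ [0,1]^d and every coordinate index 1 ≤ s ≤ d, | ∫_{G(x,z)} (y^{(s)} − x^{(s)}) dy | ≤ c_2 · vol[G(x,z)]^{(d+1)/d}, where the superscript (s) denotes the s-th coordinate and the integral is with respect to Lebesgue measure on ℝ^d. -/

import Mathlib

/-!
On `G(x,z) ⊆ H(x,z)` every coordinate satisfies `|y⁽ˢ⁾ - x⁽ˢ⁾| ≤ r := ‖z - x‖`, so the integral
is at most `r · vol G(x,z)`. Conversely `G(x,z)` is not too thin: since `r ≤ √d`, the cube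
`[0,1]^d` contains an axis-parallel cube of side `ℓ = r / (2d) ≤ 1/2` within distance `√d · ℓ ≤ r`
of `x`, whence `vol G(x,z) ≥ (r / (2d))^d`, i.e. `r ≤ 2d · vol G(x,z)^{1/d}`.
-/

open MeasureTheory Finset

/-- The unit cube `[0,1]^d` in `ℝ^d`. -/
def unitCube (d : ℕ) : Set (EuclideanSpace ℝ (Fin d)) :=
  WithLp.ofLp ⁻¹' (Set.univ.pi fun _ => Set.Icc (0 : ℝ) 1)

/-- `H(u,v)`: the closed Euclidean ball centered at `u` of radius `‖v - u‖`. -/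
def Hset {d : ℕ} (u v : EuclideanSpace ℝ (Fin d)) : Set (EuclideanSpace ℝ (Fin d)) :=
  Metric.closedBall u ‖v - u‖

/-- `G(u,v) = H(u,v) ∩ [0,1]^d`. -/
def Gset {d : ℕ} (u v : EuclideanSpace ℝ (Fin d)) : Set (EuclideanSpace ℝ (Fin d)) :=
  Hset u v ∩ unitCube d

open Set

namespace EuclideanSpace

variable {ι : Type*} [Fintype ι]

lemma norm_le_sqrt_card_mul_of_forall_abs_le {v : EuclideanSpace ℝ ι} {c : ℝ} (hc : 0 ≤ c)
    (hv : ∀ i, |v i| ≤ c) : ‖v‖ ≤ √(Fintype.card ι) * c := by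
  rw [EuclideanSpace.norm_eq]
  calc √(∑ i, ‖v i‖ ^ 2) ≤ √(∑ _ : ι, c ^ 2) := by
        gcongr with i
        exact hv i
    _ = √(Fintype.card ι) * c := by
        simp [Real.sqrt_mul, Real.sqrt_sq hc]

lemma volume_preimage_ofLp_pi_Icc (a b : ι → ℝ) :
    volume (WithLp.ofLp ⁻¹' univ.pi fun i => Icc (a i) (b i) : Set (EuclideanSpace ℝ ι)) =
      ∏ i, ENNReal.ofReal (b i - a i) := by
  rw [(PiLp.volume_preserving_ofLp ι).measure_preimage
    (MeasurableSet.univ_pi fun _ => measurableSet_Icc).nullMeasurableSet, volume_pi_pi]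
  simp [Real.volume_Icc]

lemma abs_setIntegral_apply_sub_le {μ : Measure (EuclideanSpace ℝ ι)}
    {S : Set (EuclideanSpace ℝ ι)} {x : EuclideanSpace ℝ ι} {r : ℝ}
    (hS : S ⊆ Metric.closedBall x r) (hμS : μ S < ⊤) (s : ι) :
    |∫ y in S, (y s - x s) ∂μ| ≤ r * μ.real S :=
  norm_setIntegral_le_of_norm_le_const hμS fun y hy =>
    calc ‖y s - x s‖ = ‖(y - x) s‖ := rfl
      _ ≤ ‖y - x‖ := PiLp.norm_apply_le _ s
      _ ≤ r := by simpa [dist_eq_norm] using hS hy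

end EuclideanSpace

open EuclideanSpace

lemma exists_Icc_subset_unitInterval_inter_closedBall {t ℓ : ℝ} (ht : t ∈ Icc (0 : ℝ) 1)
    (hℓ : ℓ ≤ 1 / 2) : ∃ a, Icc a (a + ℓ) ⊆ Icc 0 1 ∩ Metric.closedBall t ℓ := by
  obtain ⟨ht₀, ht₁⟩ := ht
  rcases le_total t (1 / 2) with h | h
  · refine ⟨t, fun y ⟨hy₀, hy₁⟩ => ?_⟩
    simp only [Real.closedBall_eq_Icc, mem_inter_iff, Set.mem_Icc]
    refine ⟨⟨?_, ?_⟩, ?_, ?_⟩ <;> linarith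
  · refine ⟨t - ℓ, fun y ⟨hy₀, hy₁⟩ => ?_⟩
    simp only [Real.closedBall_eq_Icc, mem_inter_iff, Set.mem_Icc]
    refine ⟨⟨?_, ?_⟩, ?_, ?_⟩ <;> linarith

lemma norm_sub_le_sqrt_of_mem_unitCube {d : ℕ} {x z : EuclideanSpace ℝ (Fin d)}
    (hx : x ∈ unitCube d) (hz : z ∈ unitCube d) : ‖z - x‖ ≤ √d := by
  simpa using norm_le_sqrt_card_mul_of_forall_abs_le (v := z - x) zero_le_one fun i => by
    obtain ⟨hx₀, hx₁⟩ := hx i (mem_univ i)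
    obtain ⟨hz₀, hz₁⟩ := hz i (mem_univ i)
    rw [PiLp.sub_apply, abs_le]
    constructor <;> linarith

lemma ofReal_pow_le_volume_unitCube_inter_closedBall {d : ℕ} {x : EuclideanSpace ℝ (Fin d)}
    (hx : x ∈ unitCube d) {ℓ : ℝ} (hℓ₀ : 0 ≤ ℓ) (hℓ : ℓ ≤ 1 / 2) :
    ENNReal.ofReal ℓ ^ d ≤ volume (unitCube d ∩ Metric.closedBall x (√d * ℓ)) := by
  choose a ha using fun i => exists_Icc_subset_unitInterval_inter_closedBall (hx i (mem_univ i)) hℓ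
  calc ENNReal.ofReal ℓ ^ d
      = volume (WithLp.ofLp ⁻¹' univ.pi fun i => Icc (a i) (a i + ℓ)
          : Set (EuclideanSpace ℝ (Fin d))) := by
        rw [volume_preimage_ofLp_pi_Icc]
        simp
    _ ≤ volume (unitCube d ∩ Metric.closedBall x (√d * ℓ)) := by
        refine measure_mono fun y hy => ⟨fun i _ => (ha i (hy i (mem_univ i))).1, ?_⟩
        rw [Metric.mem_closedBall, dist_eq_norm]
        simpa using norm_le_sqrt_card_mul_of_forall_abs_le (v := y - x) hℓ₀ fun i => by
          simpa [Real.dist_eq] using (ha i (hy i (mem_univ i))).2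

lemma volume_Gset_lt_top {d : ℕ} (x z : EuclideanSpace ℝ (Fin d)) : volume (Gset x z) < ⊤ :=
  (measure_mono inter_subset_left).trans_lt measure_closedBall_lt_top

lemma norm_sub_le_mul_volume_Gset_rpow {d : ℕ} (hd : 0 < d) {x z : EuclideanSpace ℝ (Fin d)}
    (hx : x ∈ unitCube d) (hz : z ∈ unitCube d) :
    ‖z - x‖ ≤ 2 * d * (volume (Gset x z)).toReal ^ (d : ℝ)⁻¹ := by
  set r := ‖z - x‖
  have hd' : (1 : ℝ) ≤ d := Nat.one_le_cast.mpr hd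
  have hsqrt : √(d : ℝ) ≤ d := Real.sqrt_le_self_iff.mpr (Or.inr hd')
  have hr : r ≤ √d := norm_sub_le_sqrt_of_mem_unitCube hx hz
  set ℓ := r / (2 * d)
  have hℓ₀ : 0 ≤ ℓ := by positivity
  have hℓ : ℓ ≤ 1 / 2 := by
    rw [div_le_iff₀ (by positivity)]
    linarith
  have hball : √d * ℓ ≤ r := by
    rw [mul_div_assoc', div_le_iff₀ (by positivity)]
    nlinarith [norm_nonneg (z - x)]
  have hvol : ENNReal.ofReal (ℓ ^ d) ≤ volume (Gset x z) := by
    rw [ENNReal.ofReal_pow hℓ₀, Gset, Hset, inter_comm]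
    exact (ofReal_pow_le_volume_unitCube_inter_closedBall hx hℓ₀ hℓ).trans
      (measure_mono (inter_subset_inter_right _ (Metric.closedBall_subset_closedBall hball)))
  have hℓV : ℓ ≤ (volume (Gset x z)).toReal ^ (d : ℝ)⁻¹ := by
    rw [Real.le_rpow_inv_iff_of_pos hℓ₀ ENNReal.toReal_nonneg (by positivity), Real.rpow_natCast]
    exact (ENNReal.ofReal_le_iff_le_toReal (volume_Gset_lt_top x z).ne).mp hvol
  calc r = 2 * d * ℓ := (mul_div_cancel₀ r (by positivity)).symm
    _ ≤ 2 * d * (volume (Gset x z)).toReal ^ (d : ℝ)⁻¹ := by gcongr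

/-- Claim 2: there is `c₂ > 0` depending only on `d` such that for all
`x, z ∈ [0,1]^d` and every coordinate `s`,
`|∫_{G(x,z)} (y⁽ˢ⁾ - x⁽ˢ⁾) dy| ≤ c₂ · vol[G(x,z)]^{(d+1)/d}`. -/
theorem integral_coordinate_Gset_bound (d : ℕ) (hd : 0 < d) :
    ∃ c₂ : ℝ, 0 < c₂ ∧ ∀ x ∈ unitCube d, ∀ z ∈ unitCube d, ∀ s : Fin d,
      |∫ y in Gset x z, (y s - x s)| ≤
        c₂ * (volume (Gset x z)).toReal ^ (((d : ℝ) + 1) / (d : ℝ)) := by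
  refine ⟨2 * d, by positivity, fun x hx z hz s => ?_⟩
  set V := (volume (Gset x z)).toReal
  have hV : 0 ≤ V := ENNReal.toReal_nonneg
  calc |∫ y in Gset x z, (y s - x s)|
      ≤ ‖z - x‖ * V := abs_setIntegral_apply_sub_le inter_subset_left (volume_Gset_lt_top x z) s
    _ ≤ 2 * d * V ^ (d : ℝ)⁻¹ * V := by gcongr; exact norm_sub_le_mul_volume_Gset_rpow hd hx hz
    _ = 2 * d * V ^ (((d : ℝ) + 1) / d) := by
        rw [add_div, div_self (by positivity), one_div, Real.rpow_add' hV (by positivity),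
          Real.rpow_one]
        ring
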